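/- Set x = j ∘ i ∈ End(W), F_l = ker( B_{l−1,l} ∘ ⋯ ∘ B_{1,2} ∘ i ) for 1 ≤ l ≤ n−1, F_0 = 0. Fix 2 ≤ k ≤ n−1, let S ⊆ V_k be a subspace with S ⊆ ker B_{k,k−1} ∩ ker B_{k,k+1} (with the conventions B_{n−1,n} = 0 and interpreting ker B_{k,k+1} = V_k when k = n−1), let p : V_k → V_k/S be the canonical projection, and set F′_k = ker( p ∘ B_{k−1,k} ∘ ⋯ ∘ B_{1,2} ∘ i ). Then F_k ⊆ F′_k ⊆ x^{−1}(F_{k−1}). -/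

import Mathlib

/-! The relations let `i ∘ j` slide up the ladder: by induction on `l`,
`B_{l-1,l} ⋯ B_{1,2} ∘ i ∘ j = B_{l+1,l} ∘ B_{l,l+1} ⋯ B_{1,2}`.  Hence `x⁻¹(F_{k-1})` is the
preimage of `ker B_{k,k-1}` under `B_{k-1,k} ⋯ B_{1,2} ∘ i`, which contains the preimage of `S`,
i.e. `F'_k`. -/

noncomputable section

variable (V : ℕ → Type*) [∀ k, AddCommGroup (V k)] [∀ k, Module ℂ (V k)]

/-- The ascending composite `B_{l-1,l} ∘ ⋯ ∘ B_{1,2} : V 1 →ₗ V l` (the identity for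
`l = 1`), where `Bup k : V (k-1) → V k` is the map `B_{k-1,k}`. -/
def asc (Bup : ∀ k, V (k - 1) →ₗ[ℂ] V k) : (l : ℕ) → (V 1 →ₗ[ℂ] V l)
  | 0 => 0
  | 1 => LinearMap.id
  | l + 2 => (Bup (l + 2)).comp (asc Bup (l + 1))

theorem asc_succ (Bup : ∀ k, V (k - 1) →ₗ[ℂ] V k) {l : ℕ} (hl : 1 ≤ l) :
    asc V Bup (l + 1) = (Bup (l + 1)).comp (asc V Bup l) := by
  obtain ⟨m, rfl⟩ : ∃ m, l = m + 1 := ⟨l - 1, by omega⟩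
  rfl

theorem asc_comp_comp_eq_comp_asc {W : Type*} [AddCommGroup W] [Module ℂ W]
    (Bdown : ∀ k, V k →ₗ[ℂ] V (k - 1)) (Bup : ∀ k, V (k - 1) →ₗ[ℂ] V k)
    (i : W →ₗ[ℂ] V 1) (j : V 1 →ₗ[ℂ] W)
    (hij : i.comp j = (Bdown 2).comp (Bup 2)) {l : ℕ} (hl : 1 ≤ l)
    (hrel : ∀ m, 2 ≤ m → m ≤ l → (Bup m).comp (Bdown m) = (Bdown (m + 1)).comp (Bup (m + 1))) :
    (asc V Bup l).comp (i.comp j) = (Bdown (l + 1)).comp (asc V Bup (l + 1)) := by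
  induction l, hl using Nat.le_induction with
  | base => exact hij
  | succ l hl ih =>
    calc (asc V Bup (l + 1)).comp (i.comp j)
        = (Bup (l + 1)).comp ((asc V Bup l).comp (i.comp j)) := by
          rw [asc_succ V Bup hl, LinearMap.comp_assoc]
      _ = ((Bup (l + 1)).comp (Bdown (l + 1))).comp (asc V Bup (l + 1)) := by
          rw [ih fun m hm hml => hrel m hm (by omega), LinearMap.comp_assoc]
      _ = (Bdown (l + 2)).comp (asc V Bup (l + 2)) := by
          rw [hrel (l + 1) (by omega) le_rfl, LinearMap.comp_assoc]
          rfl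

theorem comap_ker_asc_comp_eq {W : Type*} [AddCommGroup W] [Module ℂ W]
    (Bdown : ∀ k, V k →ₗ[ℂ] V (k - 1)) (Bup : ∀ k, V (k - 1) →ₗ[ℂ] V k)
    (i : W →ₗ[ℂ] V 1) (j : V 1 →ₗ[ℂ] W)
    (hij : i.comp j = (Bdown 2).comp (Bup 2)) {l : ℕ} (hl : 1 ≤ l)
    (hrel : ∀ m, 2 ≤ m → m ≤ l → (Bup m).comp (Bdown m) = (Bdown (m + 1)).comp (Bup (m + 1))) :
    Submodule.comap (j.comp i) (LinearMap.ker ((asc V Bup l).comp i))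
      = Submodule.comap ((asc V Bup (l + 1)).comp i) (LinearMap.ker (Bdown (l + 1))) := by
  rw [← LinearMap.ker_comp, ← LinearMap.ker_comp]
  congr 1
  calc ((asc V Bup l).comp i).comp (j.comp i) = ((asc V Bup l).comp (i.comp j)).comp i := rfl
    _ = (Bdown (l + 1)).comp ((asc V Bup (l + 1)).comp i) := by
      rw [asc_comp_comp_eq_comp_asc V Bdown Bup i j hij hl hrel]
      rfl

theorem flag_subspace_between
    (n : ℕ)
    (W : Type*) [AddCommGroup W] [Module ℂ W]
    (Bdown : ∀ k, V k →ₗ[ℂ] V (k - 1)) (Bup : ∀ k, V (k - 1) →ₗ[ℂ] V k)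
    (i : W →ₗ[ℂ] V 1) (j : V 1 →ₗ[ℂ] W)
    (hij : i.comp j = (Bdown 2).comp (Bup 2))
    (hrel : ∀ l, 2 ≤ l → l ≤ n - 2 →
      (Bup l).comp (Bdown l) = (Bdown (l + 1)).comp (Bup (l + 1))) :
    ∀ k, 2 ≤ k → k ≤ n - 1 → ∀ S : Submodule ℂ (V k),
      S ≤ LinearMap.ker (Bdown k) →
      (k ≤ n - 2 → S ≤ LinearMap.ker (Bup (k + 1))) →
      LinearMap.ker ((asc V Bup k).comp i)
          ≤ LinearMap.ker (S.mkQ.comp ((asc V Bup k).comp i))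
        ∧ LinearMap.ker (S.mkQ.comp ((asc V Bup k).comp i))
          ≤ Submodule.comap (j.comp i) (LinearMap.ker ((asc V Bup (k - 1)).comp i)) := by
  intro k hk2 hkn S hS _
  obtain ⟨l, rfl⟩ : ∃ l, k = l + 1 := ⟨k - 1, by omega⟩
  refine ⟨LinearMap.ker_le_ker_comp _ _, ?_⟩
  rw [comap_ker_asc_comp_eq V Bdown Bup i j hij (by omega) fun m hm hml => hrel m hm (by omega),
    LinearMap.ker_comp, Submodule.ker_mkQ]
  exact Submodule.comap_mono hS

end
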